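/- arXiv:2208.10021 — 2 statements merged into one kernel-verified Lean document; each statement's English description precedes it below -/
import Mathlib

section
/- Let n ≥ 1 and 1 ≤ q ≤ n be integers, let p, δ, ε, C be positive reals, and let m ≥ 0 be a real number. Suppose a_1, …, a_n are real numbers with 0 < a_1 ≤ ⋯ ≤ a_n and a_1 ⋯ a_n ≥ C ε^m, and suppose â_1, …, â_n are real numbers satisfying â_j ≥ (δ/p) a_j + ε/p for every j. Then the quantity γ := qε / (p(â_1 + ⋯ + â_q)) is well defined (the denominator is positive) and satisfies γ ≤ min(1, qε/(δ a_q)) ≤ min(1, q C^{-1/q} δ^{-1} ε^{1 - m/q} (a_{q+1} ⋯ a_n)^{1/q}). -/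
/-!
Summing the lower bounds on the `â j` gives `p (â 1 + ⋯ + â q) ≥ δ a q + q ε`, which bounds `γ`
both by `1` and by `q ε / (δ a q)`. By monotonicity `a 1 ⋯ a q ≤ (a q) ^ q`, so
`C ε ^ m ≤ (a q) ^ q · a (q+1) ⋯ a n`; taking `q`-th roots bounds `1 / a q` by
`(a (q+1) ⋯ a n / (C ε ^ m)) ^ (1/q)`.
-/

open Finset Real

lemma mul_sum_add_card_mul_le_mul_sum {ι : Type*} (s : Finset ι) {p δ ε : ℝ} (hp : 0 < p)
    {a b : ι → ℝ} (h : ∀ j ∈ s, δ / p * a j + ε / p ≤ b j) :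
    δ * ∑ j ∈ s, a j + #s * ε ≤ p * ∑ j ∈ s, b j := by
  have hsum : δ / p * ∑ j ∈ s, a j + #s * (ε / p) ≤ ∑ j ∈ s, b j := by
    simpa only [sum_add_distrib, ← mul_sum, sum_const, nsmul_eq_mul] using sum_le_sum h
  calc δ * ∑ j ∈ s, a j + #s * ε = p * (δ / p * ∑ j ∈ s, a j + #s * (ε / p)) := by
        field_simp
    _ ≤ p * ∑ j ∈ s, b j := by gcongr

lemma div_le_min_one_div {c u w : ℝ} (hc : 0 ≤ c) (hu : 0 < u) (h : u + c ≤ w) :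
    c / w ≤ min 1 (c / u) := by
  have hw : 0 < w := by linarith
  refine le_min ((div_le_one hw).2 (by linarith)) ?_
  exact div_le_div_of_nonneg_left hc hu (by linarith)

lemma prod_Icc_le_pow_mul_prod_Icc {a : ℕ → ℝ} {q n : ℕ} (hqn : q ≤ n)
    (h0 : ∀ i ∈ Icc 1 q, 0 ≤ a i) (hle : ∀ i ∈ Icc 1 q, a i ≤ a q)
    (htail : 0 ≤ ∏ i ∈ Icc (q + 1) n, a i) :
    ∏ i ∈ Icc 1 n, a i ≤ a q ^ q * ∏ i ∈ Icc (q + 1) n, a i := by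
  have hsplit : ∏ i ∈ Icc 1 n, a i = (∏ i ∈ Icc 1 q, a i) * ∏ i ∈ Icc (q + 1) n, a i := by
    rw [Icc_add_one_left_eq_Ioc]
    exact (prod_Ioc_consecutive a (Nat.zero_le q) hqn).symm
  have hpow : ∏ i ∈ Icc 1 q, a i ≤ a q ^ q := by
    simpa using prod_le_prod h0 hle
  rw [hsplit]
  exact mul_le_mul_of_nonneg_right hpow htail

lemma inv_le_rpow_one_div_of_le_pow_mul {a x y : ℝ} {q : ℕ} (hq : q ≠ 0) (ha : 0 < a)
    (hx : 0 < x) (hy : 0 ≤ y) (h : x ≤ a ^ q * y) : a⁻¹ ≤ (y / x) ^ (1 / (q : ℝ)) := by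
  rw [one_div, le_rpow_inv_iff_of_pos (inv_nonneg.2 ha.le) (div_nonneg hy hx.le)
    (Nat.cast_pos.2 (Nat.pos_of_ne_zero hq)), rpow_natCast, inv_pow, le_div_iff₀ hx,
    inv_mul_le_iff₀ (pow_pos ha q)]
  exact h

lemma mul_rpow_neg_one_div_mul_rpow_one_sub_div {q C δ ε m P : ℝ} (hq : q ≠ 0) (hC : 0 < C)
    (hε : 0 < ε) (hP : 0 ≤ P) :
    q * C ^ (-(1 / q)) * δ⁻¹ * ε ^ (1 - m / q) * P ^ (1 / q) =
      q * ε / δ * (P / (C * ε ^ m)) ^ (1 / q) := by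
  rw [div_rpow hP (by positivity), mul_rpow hC.le (by positivity), ← rpow_mul hε.le,
    mul_one_div, rpow_neg hC.le, rpow_sub hε, rpow_one]
  have hεm : 0 < ε ^ (m / q) := by positivity
  field_simp

theorem stmt1_general (n q : ℕ) (hq1 : 1 ≤ q) (hqn : q ≤ n)
    (p δ ε C m : ℝ) (hp : 0 < p) (hδ : 0 < δ) (hε : 0 < ε) (hC : 0 < C)
    (a : ℕ → ℝ) (ahat : ℕ → ℝ)
    (ha1 : 0 < a 1)
    (hmono : ∀ i j, 1 ≤ i → i ≤ j → j ≤ n → a i ≤ a j)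
    (hprod : C * ε ^ m ≤ ∏ i ∈ Finset.Icc 1 n, a i)
    (hhat : ∀ j, 1 ≤ j → j ≤ n → (δ / p) * a j + ε / p ≤ ahat j) :
    0 < p * (∑ j ∈ Finset.Icc 1 q, ahat j) ∧
    (q : ℝ) * ε / (p * (∑ j ∈ Finset.Icc 1 q, ahat j)) ≤
      min 1 ((q : ℝ) * ε / (δ * a q)) ∧
    min 1 ((q : ℝ) * ε / (δ * a q)) ≤
      min 1 ((q : ℝ) * C ^ (-(1 / (q : ℝ))) * δ⁻¹ * ε ^ (1 - m / (q : ℝ)) *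
        (∏ i ∈ Finset.Icc (q + 1) n, a i) ^ ((1 : ℝ) / q)) := by
  have hq0 : q ≠ 0 := by omega
  have hpos : ∀ i, 1 ≤ i → i ≤ n → 0 < a i := fun i hi hin =>
    ha1.trans_le (hmono 1 i le_rfl hi hin)
  have hhead : ∀ i ∈ Icc 1 q, 0 < a i := fun i hi =>
    hpos i (mem_Icc.1 hi).1 ((mem_Icc.1 hi).2.trans hqn)
  have haq : 0 < a q := hpos q hq1 hqn
  have hden : δ * a q + q * ε ≤ p * ∑ j ∈ Icc 1 q, ahat j := by
    have h := mul_sum_add_card_mul_le_mul_sum (Icc 1 q) hp (a := a) (b := ahat) fun j hj =>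
      hhat j (mem_Icc.1 hj).1 ((mem_Icc.1 hj).2.trans hqn)
    have hsingle : a q ≤ ∑ j ∈ Icc 1 q, a j :=
      single_le_sum (fun i hi => (hhead i hi).le) (mem_Icc.2 ⟨hq1, le_rfl⟩)
    rw [Nat.card_Icc, Nat.add_sub_cancel] at h
    linarith [mul_le_mul_of_nonneg_left hsingle hδ.le]
  have htail : 0 ≤ ∏ i ∈ Icc (q + 1) n, a i :=
    prod_nonneg fun i hi => (hpos i (by grind) (mem_Icc.1 hi).2).le
  have hpow : C * ε ^ m ≤ a q ^ q * ∏ i ∈ Icc (q + 1) n, a i :=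
    hprod.trans <| prod_Icc_le_pow_mul_prod_Icc hqn (fun i hi => (hhead i hi).le)
      (fun i hi => hmono i q (mem_Icc.1 hi).1 (mem_Icc.1 hi).2 hqn) htail
  have hqε : 0 < (q : ℝ) * ε := by positivity
  refine ⟨(add_pos (mul_pos hδ haq) hqε).trans_le hden,
    div_le_min_one_div hqε.le (mul_pos hδ haq) hden, min_le_min_left 1 ?_⟩
  rw [mul_rpow_neg_one_div_mul_rpow_one_sub_div (Nat.cast_ne_zero.2 hq0) hC hε htail,
    ← div_div, div_eq_mul_inv _ (a q)]
  gcongr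
  exact inv_le_rpow_one_div_of_le_pow_mul hq0 haq (by positivity) htail hpow

/-- the key numerical estimate in the proof of the Nadel-type vanishing
theorem. With `0 < a 1 ≤ ⋯ ≤ a n`, `a 1 ⋯ a n ≥ C * ε ^ m`, and
`â j ≥ (δ/p) * a j + ε/p` for all `j`, the quantity
`γ := q * ε / (p * (â 1 + ⋯ + â q))` has positive denominator and satisfies
`γ ≤ min 1 (q*ε/(δ * a q)) ≤ min 1 (q * C^(-1/q) * δ⁻¹ * ε^(1 - m/q) * (a (q+1) ⋯ a n)^(1/q))`. -/
theorem stmt1 (n q : ℕ) (hn : 1 ≤ n) (hq1 : 1 ≤ q) (hqn : q ≤ n)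
    (p δ ε C m : ℝ) (hp : 0 < p) (hδ : 0 < δ) (hε : 0 < ε) (hC : 0 < C) (hm : 0 ≤ m)
    (a : ℕ → ℝ) (ahat : ℕ → ℝ)
    (ha1 : 0 < a 1)
    (hmono : ∀ i j, 1 ≤ i → i ≤ j → j ≤ n → a i ≤ a j)
    (hprod : C * ε ^ m ≤ ∏ i ∈ Finset.Icc 1 n, a i)
    (hhat : ∀ j, 1 ≤ j → j ≤ n → (δ / p) * a j + ε / p ≤ ahat j) :
    0 < p * (∑ j ∈ Finset.Icc 1 q, ahat j) ∧
    (q : ℝ) * ε / (p * (∑ j ∈ Finset.Icc 1 q, ahat j)) ≤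
      min 1 ((q : ℝ) * ε / (δ * a q)) ∧
    min 1 ((q : ℝ) * ε / (δ * a q)) ≤
      min 1 ((q : ℝ) * C ^ (-(1 / (q : ℝ))) * δ⁻¹ * ε ^ (1 - m / (q : ℝ)) *
        (∏ i ∈ Finset.Icc (q + 1) n, a i) ^ ((1 : ℝ) / q)) :=
  stmt1_general n q hq1 hqn p δ ε C m hp hδ hε hC a ahat ha1 hmono hprod hhat
end

section
/- Let E and F be complex Hilbert spaces and let T be a densely defined closed linear operator from E to F, with Hilbert-space adjoint T*. Let β ∈ F and let A, B > 0 be real numbers such that |⟨β, α⟩_F|² ≤ A(‖T*α‖_E² + B‖α‖_F²) for every α in the domain of T*. Then there exist u in the domain of T and v ∈ F such that β = Tu + v and ‖u‖_E² + B^{-1}‖v‖_F² ≤ A. -/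
/-!
The functional `α ↦ ⟪β, α⟫` on `dom T*` is bounded by `√A` times the norm of
`Sα = (T*α, √B α) ∈ E ⊕₂ F`, so Hahn–Banach and Riesz represent it by some `ξ = (x, w)` with
`‖ξ‖² ≤ A`, i.e. `⟪x, T*α⟫ = ⟪β - √B w, α⟫` for all `α ∈ dom T*`. A closed graph is the
orthogonal complement of its orthogonal complement, and the latter consists of the pairs
`(-T*α, α)`; hence `(x, β - √B w)` lies in the graph of `T`, and `u = x`, `v = √B w` work.
-/

open WithLp
open scoped InnerProductSpace

theorem exists_inner_eq_of_norm_le {𝕜 D H : Type*} [RCLike 𝕜] [AddCommGroup D] [Module 𝕜 D]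
    [NormedAddCommGroup H] [InnerProductSpace 𝕜 H] [CompleteSpace H]
    (S : D →ₗ[𝕜] H) (L : D →ₗ[𝕜] 𝕜) {C : ℝ} (hC : 0 ≤ C) (hL : ∀ d, ‖L d‖ ≤ C * ‖S d‖) :
    ∃ ξ : H, ‖ξ‖ ≤ C ∧ ∀ d, ⟪ξ, S d⟫_𝕜 = L d := by
  have hker : LinearMap.ker S ≤ LinearMap.ker L := fun d hd => by
    simpa [LinearMap.mem_ker.1 hd] using hL d
  let ψ : LinearMap.range S →ₗ[𝕜] 𝕜 :=
    (LinearMap.ker S).liftQ L hker ∘ₗ S.quotKerEquivRange.symm.toLinearMap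
  have hψ (d : D) : ψ ⟨S d, S.mem_range_self d⟩ = L d := by
    simp [ψ, LinearMap.quotKerEquivRange_symm_apply_image]
  have hψC : ∀ y, ‖ψ y‖ ≤ C * ‖y‖ := by
    rintro ⟨_, d, rfl⟩
    exact (hψ d).symm ▸ hL d
  obtain ⟨g, hg, hgnorm⟩ := exists_extension_norm_eq _ (ψ.mkContinuous C hψC)
  refine ⟨(InnerProductSpace.toDual 𝕜 H).symm g, ?_, fun d => ?_⟩
  · rw [LinearIsometryEquiv.norm_map, hgnorm]
    exact ψ.mkContinuous_norm_le hC hψC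
  · rw [InnerProductSpace.toDual_symm_apply, ← hψ d]
    exact hg ⟨S d, S.mem_range_self d⟩

theorem LinearPMap.IsClosed.mem_graph_of_inner_adjoint {𝕜 E F : Type*} [RCLike 𝕜]
    [NormedAddCommGroup E] [InnerProductSpace 𝕜 E] [CompleteSpace E]
    [NormedAddCommGroup F] [InnerProductSpace 𝕜 F] [CompleteSpace F]
    {T : E →ₗ.[𝕜] F} (hT : T.IsClosed) (hdense : Dense (T.domain : Set E)) {x : E} {y : F}
    (h : ∀ α : T.adjoint.domain, ⟪x, T.adjoint α⟫_𝕜 = ⟪y, (α : F)⟫_𝕜) : (x, y) ∈ T.graph := by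
  let K : Submodule 𝕜 (WithLp 2 (E × F)) :=
    T.graph.comap (WithLp.linearEquiv 2 𝕜 (E × F)).toLinearMap
  have hK : _root_.IsClosed (K : Set (WithLp 2 (E × F))) :=
    hT.preimage (prod_continuous_ofLp 2 E F)
  suffices toLp 2 (x, y) ∈ Kᗮᗮ by
    rwa [Submodule.orthogonal_orthogonal_eq_closure, hK.submodule_topologicalClosure_eq] at this
  refine (Submodule.mem_orthogonal' _ _).2 fun q hq => ?_
  have hq_adj : (q.snd, -q.fst) ∈ T.adjoint.graph := by
    rw [LinearPMap.adjoint_graph_eq_graph_adjoint hdense, Submodule.mem_adjoint_iff]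
    intro a b hab
    have hq_ab := (Submodule.mem_orthogonal K q).1 hq (toLp 2 (a, b)) hab
    rw [prod_inner_apply] at hq_ab
    simp only [inner_neg_right, sub_neg_eq_add]
    rwa [add_comm]
  obtain ⟨α, hα, hTα⟩ := T.adjoint.mem_graph_iff.1 hq_adj
  have hxy := h α
  rw [hTα, hα, inner_neg_right] at hxy
  simp only [prod_inner_apply, ofLp_fst, ofLp_snd]
  linear_combination -hxy

/-- Hörmander-type existence lemma. If `T` is a densely defined closed
operator between complex Hilbert spaces and `β` satisfies
`|⟨β, α⟩|² ≤ A(‖T*α‖² + B‖α‖²)` for all `α ∈ dom T*`, then there are `u ∈ dom T` and `v`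
with `β = Tu + v` and `‖u‖² + B⁻¹‖v‖² ≤ A`. -/
theorem stmt4 {E F : Type*}
    [NormedAddCommGroup E] [InnerProductSpace ℂ E] [CompleteSpace E]
    [NormedAddCommGroup F] [InnerProductSpace ℂ F] [CompleteSpace F]
    (T : E →ₗ.[ℂ] F) (hdense : Dense (T.domain : Set E)) (hclosed : T.IsClosed)
    (β : F) (A B : ℝ) (hA : 0 < A) (hB : 0 < B)
    (hineq : ∀ α : T.adjoint.domain,
      ‖(inner ℂ β (α : F) : ℂ)‖ ^ 2 ≤ A * (‖T.adjoint α‖ ^ 2 + B * ‖(α : F)‖ ^ 2)) :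
    ∃ (u : T.domain) (v : F), β = T u + v ∧ ‖(u : E)‖ ^ 2 + B⁻¹ * ‖v‖ ^ 2 ≤ A := by
  set c : ℂ := (Real.sqrt B : ℂ)
  have hc (x : F) : ‖c • x‖ ^ 2 = B * ‖x‖ ^ 2 := by
    rw [norm_smul, Complex.norm_real, Real.norm_of_nonneg (Real.sqrt_nonneg B), mul_pow,
      Real.sq_sqrt hB.le]
  let S : T.adjoint.domain →ₗ[ℂ] WithLp 2 (E × F) :=
    (WithLp.linearEquiv 2 ℂ (E × F)).symm.toLinearMap ∘ₗ
      T.adjoint.toFun.prod (c • T.adjoint.domain.subtype)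
  have hS (α : T.adjoint.domain) : ‖S α‖ ^ 2 = ‖T.adjoint α‖ ^ 2 + B * ‖(α : F)‖ ^ 2 := by
    rw [prod_norm_sq_eq_of_L2, ← hc]
    rfl
  obtain ⟨ξ, hξ, hξS⟩ := exists_inner_eq_of_norm_le S (innerₛₗ ℂ β ∘ₗ T.adjoint.domain.subtype)
    (Real.sqrt_nonneg A) fun α => (pow_le_pow_iff_left₀ (norm_nonneg _) (by positivity)
      two_ne_zero).1 (by rw [mul_pow, Real.sq_sqrt hA.le, hS]; exact hineq α)
  set v := c • ξ.snd
  have hξ_adj (α : T.adjoint.domain) : ⟪ξ.fst, T.adjoint α⟫_ℂ = ⟪β - v, (α : F)⟫_ℂ := by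
    have h : ⟪ξ.fst, T.adjoint α⟫_ℂ + c * ⟪ξ.snd, (α : F)⟫_ℂ = ⟪β, (α : F)⟫_ℂ := by
      rw [← inner_smul_right]
      exact (prod_inner_apply _ _).symm.trans (hξS α)
    rw [inner_sub_left, inner_smul_left, Complex.conj_ofReal, ← h, add_sub_cancel_right]
  obtain ⟨u, hu, hTu⟩ := T.mem_graph_iff.1 (hclosed.mem_graph_of_inner_adjoint hdense hξ_adj)
  refine ⟨u, v, by rw [hTu, sub_add_cancel], ?_⟩
  calc ‖(u : E)‖ ^ 2 + B⁻¹ * ‖v‖ ^ 2 = ‖ξ‖ ^ 2 := by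
        rw [hu, hc, inv_mul_cancel_left₀ hB.ne', prod_norm_sq_eq_of_L2]
    _ ≤ Real.sqrt A ^ 2 := by gcongr
    _ = A := Real.sq_sqrt hA.le
end
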